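/- arXiv:2507.08243 — 3 statements merged into one kernel-verified Lean document; each statement's English description precedes it below -/
import Mathlib

section
/- Let d be a positive integer, let A and B be disjoint nonempty finite subsets of the Euclidean space ℝ^d, and let α > 0 and μ with 0 < μ < 1/2 be real numbers such that ‖x − y‖ ≤ μ·α whenever x and y both lie in A or both lie in B, and ‖x − y‖ ≥ α whenever x ∈ A and y ∈ B, and suppose μ·|A| ≤ |B|. Then for every c₁ ∈ A, the K-Means++ probability of selecting the second center from B, namely the ratio (∑_{x ∈ B} ‖c₁ − x‖²) / (∑_{x ∈ A ∪ B} ‖c₁ − x‖²), is at least 1/(μ + 1). -/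
open scoped Classical in
/-- Under the LCPDM core-separation assumptions, for every `c₁ ∈ A` the
K-Means++ probability of selecting the second center from `B`, i.e.
`(∑_{x ∈ B} ‖c₁ − x‖²) / (∑_{x ∈ A ∪ B} ‖c₁ − x‖²)`, is at least `1/(μ + 1)`. -/
theorem stmt1 (d : ℕ) (hd : 0 < d)
    (A B : Finset (EuclideanSpace ℝ (Fin d)))
    (hAB : Disjoint A B) (hA : A.Nonempty) (hB : B.Nonempty)
    (α μ : ℝ) (hα : 0 < α) (hμ0 : 0 < μ) (hμ : μ < 1 / 2)
    (hintraA : ∀ x ∈ A, ∀ y ∈ A, ‖x - y‖ ≤ μ * α)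
    (hintraB : ∀ x ∈ B, ∀ y ∈ B, ‖x - y‖ ≤ μ * α)
    (hinter : ∀ x ∈ A, ∀ y ∈ B, α ≤ ‖x - y‖)
    (hcard : μ * (A.card : ℝ) ≤ (B.card : ℝ)) :
    ∀ c₁ ∈ A,
      1 / (μ + 1) ≤
        (∑ x ∈ B, ‖c₁ - x‖ ^ 2) / ∑ x ∈ A ∪ B, ‖c₁ - x‖ ^ 2 := by
  intro c₁ hc₁
  set SA := ∑ x ∈ A, ‖c₁ - x‖ ^ 2 with hSA
  set SB := ∑ x ∈ B, ‖c₁ - x‖ ^ 2 with hSB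
  have hsplit : ∑ x ∈ A ∪ B, ‖c₁ - x‖ ^ 2 = SA + SB :=
    Finset.sum_union hAB
  have hSAle : SA ≤ (A.card : ℝ) * (μ * α) ^ 2 := by
    calc SA ≤ ∑ _x ∈ A, (μ * α) ^ 2 := by
          apply Finset.sum_le_sum
          intro x hx
          have h1 := hintraA c₁ hc₁ x hx
          exact pow_le_pow_left₀ (norm_nonneg _) h1 2
      _ = (A.card : ℝ) * (μ * α) ^ 2 := by
          rw [Finset.sum_const, nsmul_eq_mul]
  have hSBge : (B.card : ℝ) * α ^ 2 ≤ SB := by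
    calc (B.card : ℝ) * α ^ 2 = ∑ _x ∈ B, α ^ 2 := by
          rw [Finset.sum_const, nsmul_eq_mul]
      _ ≤ SB := by
          apply Finset.sum_le_sum
          intro x hx
          exact pow_le_pow_left₀ hα.le (hinter c₁ hc₁ x hx) 2
  have hkey : SA ≤ μ * SB := by
    calc SA ≤ (A.card : ℝ) * (μ * α) ^ 2 := hSAle
      _ = μ * ((μ * (A.card : ℝ)) * α ^ 2) := by ring
      _ ≤ μ * ((B.card : ℝ) * α ^ 2) := by
          apply mul_le_mul_of_nonneg_left _ hμ0.le
          exact mul_le_mul_of_nonneg_right hcard (sq_nonneg α)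
      _ ≤ μ * SB := mul_le_mul_of_nonneg_left hSBge hμ0.le
  have hSBpos : 0 < SB := by
    calc (0:ℝ) < (B.card : ℝ) * α ^ 2 :=
          mul_pos (by exact_mod_cast Finset.card_pos.mpr hB) (pow_pos hα 2)
      _ ≤ SB := hSBge
  have hSAnonneg : 0 ≤ SA := Finset.sum_nonneg fun x _ => sq_nonneg _
  rw [hsplit, div_le_div_iff₀ (by positivity) (by linarith)]
  nlinarith
end

section
/- Let (X, dist) be a metric space, let C₀ and C₁ be nonempty finite subsets of X, and let μ > 0 and δ ≥ 0 be real numbers such that dist(a, a') ≤ μ · dist(c, b) for all a, a', c ∈ C₀ and all b ∈ C₁. Let y ∈ X be a point satisfying infDist(y, C₁) ≤ δ · infDist(y, C₀), where infDist denotes the infimum of distances to a set. Then for every x ∈ C₀ and every a, a' ∈ C₀, one has dist(x, y) ≥ dist(a, a') / (μ·(1 + δ)); in particular, if μ·(1 + δ) ≤ 1 then dist(x, y) is at least the diameter of C₀. -/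
/-- metric content of Proposition 3: if all intra-core distances in
`C₀` are at most `μ` times every distance between `C₀` and `C₁`, and the point `y`
satisfies `infDist(y, C₁) ≤ δ · infDist(y, C₀)`, then for every `x ∈ C₀` and all
`a, a' ∈ C₀`, `dist x y ≥ dist a a' / (μ·(1 + δ))`; in particular, if
`μ·(1 + δ) ≤ 1` then `dist x y` is at least the diameter of `C₀`. -/
theorem stmt10 {X : Type*} [MetricSpace X]
    (C₀ C₁ : Set X) (h₀ : C₀.Nonempty) (h₁ : C₁.Nonempty)
    (h₀f : C₀.Finite) (h₁f : C₁.Finite)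
    (μ δ : ℝ) (hμ : 0 < μ) (hδ : 0 ≤ δ)
    (hintra : ∀ a ∈ C₀, ∀ a' ∈ C₀, ∀ c ∈ C₀, ∀ b ∈ C₁, dist a a' ≤ μ * dist c b)
    (y : X) (hy : Metric.infDist y C₁ ≤ δ * Metric.infDist y C₀) :
    (∀ x ∈ C₀, ∀ a ∈ C₀, ∀ a' ∈ C₀, dist a a' / (μ * (1 + δ)) ≤ dist x y) ∧
    (μ * (1 + δ) ≤ 1 → ∀ x ∈ C₀, Metric.diam C₀ ≤ dist x y) := by
  have hpos : 0 < μ * (1 + δ) := by positivity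
  have key : ∀ x ∈ C₀, ∀ a ∈ C₀, ∀ a' ∈ C₀, dist a a' ≤ μ * (1 + δ) * dist x y := by
    intro x hx a ha a' ha'
    obtain ⟨b, hb, hbd⟩ := h₁f.isCompact.exists_infDist_eq_dist h₁ y
    have h1 : dist x b ≤ dist x y + dist y b := dist_triangle x y b
    have h2 : dist y b = Metric.infDist y C₁ := hbd.symm
    have h3 : Metric.infDist y C₀ ≤ dist y x := Metric.infDist_le_dist_of_mem hx
    have h4 : dist y b ≤ δ * dist y x := by
      rw [h2]
      exact hy.trans (by nlinarith)
    have h5 : dist x b ≤ (1 + δ) * dist x y := by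
      rw [dist_comm y x] at h4; nlinarith
    have h6 := hintra a ha a' ha' x hx b hb
    nlinarith
  constructor
  · intro x hx a ha a' ha'
    rw [div_le_iff₀ hpos]
    have := key x hx a ha a' ha'
    nlinarith
  · intro hle x hx
    apply Metric.diam_le_of_forall_dist_le dist_nonneg
    intro a ha a' ha'
    have := key x hx a ha a' ha'
    nlinarith [dist_nonneg (x := x) (y := y)]
end

section
/- Let m be a positive integer, ε > 0, and let V(r) denote the Lebesgue volume of the ball of radius r in ℝ^m. Let C be a real number with 1 < C < 2, let c₂ ≥ 1, and let n, Vol : ℕ → ℝ be sequences of positive reals satisfying n(j)/Vol(j) = C · n(j+1)/Vol(j+1) for every j, and n(0) ≥ c₂ · Vol(0)/V(ε). Then for every natural number j ≤ m, n(j) ≥ c₂ · Vol(j)/V(2ε). -/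
/-- Proposition 5: with `V(r)` the Lebesgue volume of the radius-`r`
ball in ℝ^m, if consecutive layer densities satisfy `n(j)/Vol(j) = C·n(j+1)/Vol(j+1)`
with `1 < C < 2` and the core density satisfies `n(0) ≥ c₂·Vol(0)/V(ε)`, then every
layer `j ≤ m` satisfies `n(j) ≥ c₂·Vol(j)/V(2ε)`. -/
theorem stmt13 (m : ℕ) (hm : 0 < m) (ε : ℝ) (hε : 0 < ε)
    (C : ℝ) (hC1 : 1 < C) (hC2 : C < 2)
    (c₂ : ℝ) (hc₂ : 1 ≤ c₂)
    (n Vol : ℕ → ℝ) (hn : ∀ j, 0 < n j) (hVol : ∀ j, 0 < Vol j)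
    (hdens : ∀ j : ℕ, n j / Vol j = C * (n (j + 1) / Vol (j + 1)))
    (V : ℝ → ℝ)
    (hV : ∀ r : ℝ, V r =
      (MeasureTheory.volume (Metric.ball (0 : EuclideanSpace ℝ (Fin m)) r)).toReal)
    (h0 : c₂ * Vol 0 / V ε ≤ n 0) :
    ∀ j : ℕ, j ≤ m → c₂ * Vol j / V (2 * ε) ≤ n j := by
  have hC0 : (0:ℝ) < C := lt_trans one_pos hC1
  haveI : Nonempty (Fin m) := ⟨⟨0, hm⟩⟩
  -- ball volume basics
  have hB : ∀ r : ℝ, 0 ≤ r → V r =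
      r ^ m * (MeasureTheory.volume (Metric.ball (0 : EuclideanSpace ℝ (Fin m)) 1)).toReal := by
    intro r hr
    rw [hV r, MeasureTheory.Measure.addHaar_ball _ _ hr, ENNReal.toReal_mul,
      ENNReal.toReal_ofReal (pow_nonneg hr _), finrank_euclideanSpace_fin]
  have hVε_pos : 0 < V ε := by
    rw [hV ε]
    exact ENNReal.toReal_pos (Metric.measure_ball_pos _ _ hε).ne'
      MeasureTheory.measure_ball_lt_top.ne
  have hscale : V (2 * ε) = 2 ^ m * V ε := by
    rw [hB (2*ε) (by linarith), hB ε hε.le, mul_pow]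
    ring
  have hV2ε_pos : 0 < V (2*ε) := by
    rw [hscale]; positivity
  -- density recursion
  have hpow : ∀ j : ℕ, n 0 / Vol 0 = C ^ j * (n j / Vol j) := by
    intro j
    induction j with
    | zero => simp
    | succ k ih =>
      rw [ih, hdens k, pow_succ]; ring
  -- core density bound
  have h1 : c₂ / V ε ≤ n 0 / Vol 0 := by
    rw [div_le_div_iff₀ hVε_pos (hVol 0)]
    calc c₂ * Vol 0 = c₂ * Vol 0 / V ε * V ε := by
          field_simp
      _ ≤ n 0 * V ε := mul_le_mul_of_nonneg_right h0 hVε_pos.le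
  intro j hj
  have hCj : C ^ j ≤ 2 ^ m := by
    calc C ^ j ≤ C ^ m := pow_le_pow_right₀ hC1.le hj
      _ ≤ 2 ^ m := pow_le_pow_left₀ hC0.le hC2.le m
  have hCjpos : (0:ℝ) < C ^ j := pow_pos hC0 j
  -- density of layer j
  have hd : c₂ / V (2*ε) ≤ n j / Vol j := by
    have hdj : n j / Vol j = (n 0 / Vol 0) / C ^ j := by
      rw [hpow j, mul_div_cancel_left₀ _ (pow_pos hC0 j).ne']
    rw [hdj, hscale]
    calc c₂ / (2 ^ m * V ε) ≤ c₂ / (C ^ j * V ε) := by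
          apply div_le_div_of_nonneg_left (by linarith) (by positivity)
          exact mul_le_mul_of_nonneg_right hCj hVε_pos.le
      _ = (c₂ / V ε) / C ^ j := by rw [div_div, mul_comm]
      _ ≤ (n 0 / Vol 0) / C ^ j := (div_le_div_iff_of_pos_right hCjpos).mpr h1
  calc c₂ * Vol j / V (2*ε) = (c₂ / V (2*ε)) * Vol j := by ring
    _ ≤ (n j / Vol j) * Vol j := mul_le_mul_of_nonneg_right hd (hVol j).le
    _ = n j := by rw [div_mul_eq_mul_div, mul_div_assoc, div_self (hVol j).ne', mul_one]
end
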